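/- Let k be a field, L a finite-dimensional Lie algebra over k, F = k(t) the field of rational functions, and regard F ⊗_k L as a Lie algebra over F. Let H be an F-Lie subalgebra of F ⊗_k L, let M = H ∩ (k[t] ⊗_k L) (intersection inside F ⊗_k L via the canonical embedding), and let S = ε₀(M) ⊆ L, where ε₀ : k[t] ⊗_k L → L is evaluation of polynomial coefficients at 0. Then: (1) S is a Lie subalgebra of L with dim_k S = dim_F H; (2) dim_k ⁅S, S⁆ ≤ dim_F ⁅H, H⁆, hence dim_k S − dim_k ⁅S,S⁆ ≥ dim_F H − dim_F ⁅H,H⁆; and (3) dim_k z(S) ≥ dim_F z(H), where z denotes the centre, z(S) = {x ∈ S : ⁅x, s⁆ = 0 for all s ∈ S} and z(H) = {x ∈ H : ⁅x, h⁆ = 0 for all h ∈ H}. -/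

import Mathlib

/-!
The lattice `M = H ∩ (k[t] ⊗ L)` localises back to `H`, because `k(t) ⊗ L` is the
localisation of `k[t] ⊗ L` at the nonzero polynomials; so the free `k[t]`-module `M` has
rank `dim H`. Since `H` is a `k(t)`-subspace, `M` is saturated (`t • m ∈ M → m ∈ M`), and
`ε₀` has kernel `t • (k[t] ⊗ L)`; hence a `k[t]`-basis of `M` specialises to a `k`-basis of
`S = ε₀(M)` and `dim S = dim H`. The embedding and `ε₀` both respect brackets, so `S` is a
subalgebra, `ε₀` maps the lattice of `⁅H, H⁆` onto a space containing `⁅S, S⁆`, and the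
lattice of `z(H)` into `z(S)`; the rank equality applied to `⁅H, H⁆` and `z(H)` gives the
inequalities.
-/

open scoped TensorProduct

/-- Evaluation at `0` of polynomial coefficients: the `k`-linear map
`k[t] ⊗[k] L → L` sending `f ⊗ x` to `f(0) • x`. -/
noncomputable def lieEvalZeroMap (k L : Type*) [Field k] [AddCommGroup L] [Module k L] :
    Polynomial k ⊗[k] L →ₗ[k] L :=
  TensorProduct.lift ((LinearMap.lsmul k L).comp (Polynomial.lcoeff k 0))

/-- The canonical `k`-linear embedding `k[t] ⊗[k] L → k(t) ⊗[k] L` induced by the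
inclusion `k[t] → k(t)`. -/
noncomputable def liePolyToRatFuncMap (k L : Type*) [Field k] [AddCommGroup L] [Module k L] :
    Polynomial k ⊗[k] L →ₗ[k] RatFunc k ⊗[k] L :=
  LinearMap.rTensor L
    ((Algebra.linearMap (Polynomial k) (RatFunc k)).restrictScalars k)

section Specialization

open Polynomial TensorProduct Module nonZeroDivisors

variable {k L : Type*} [Field k] [AddCommGroup L] [Module k L]

theorem lieEvalZeroMap_tmul (p : k[X]) (x : L) : lieEvalZeroMap k L (p ⊗ₜ x) = p.coeff 0 • x :=
  rfl

theorem lieEvalZeroMap_smul (p : k[X]) (m : k[X] ⊗[k] L) :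
    lieEvalZeroMap k L (p • m) = p.coeff 0 • lieEvalZeroMap k L m := by
  induction m using TensorProduct.induction_on with
  | zero => simp
  | tmul q x => rw [smul_tmul', lieEvalZeroMap_tmul, lieEvalZeroMap_tmul, smul_eq_mul,
      mul_coeff_zero, mul_smul]
  | add m₁ m₂ h₁ h₂ => rw [smul_add, map_add, h₁, h₂, map_add, smul_add]

theorem exists_eq_X_smul_add_one_tmul_lieEvalZeroMap (m : k[X] ⊗[k] L) :
    ∃ m', m = (X : k[X]) • m' + 1 ⊗ₜ lieEvalZeroMap k L m := by
  induction m using TensorProduct.induction_on with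
  | zero => exact ⟨0, by simp⟩
  | tmul p x =>
    refine ⟨p.divX ⊗ₜ x, ?_⟩
    rw [lieEvalZeroMap_tmul, tmul_smul, smul_tmul', smul_tmul', ← add_tmul, smul_eq_mul,
      Algebra.smul_def, mul_one, algebraMap_eq, X_mul_divX_add]
  | add m₁ m₂ h₁ h₂ =>
    obtain ⟨m₁', e₁⟩ := h₁
    obtain ⟨m₂', e₂⟩ := h₂
    refine ⟨m₁' + m₂', ?_⟩
    rw [map_add, tmul_add, smul_add, add_add_add_comm, ← e₁, ← e₂]

theorem finrank_map_lieEvalZeroMap {N : Submodule k[X] (k[X] ⊗[k] L)} [Module.Free k[X] N]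
    [Module.Finite k[X] N] (hN : ∀ m, (X : k[X]) • m ∈ N → m ∈ N) :
    finrank k ((N.restrictScalars k).map (lieEvalZeroMap k L)) = finrank k[X] N := by
  classical
  let b := Module.Free.chooseBasis k[X] N
  let v := fun i => lieEvalZeroMap k L (b i)
  have eval_sum (c : _ → k[X]) :
      lieEvalZeroMap k L (∑ i, c i • b i : N) = ∑ i, (c i).coeff 0 • v i := by
    simp [lieEvalZeroMap_smul, v]
  have hspan :
      (N.restrictScalars k).map (lieEvalZeroMap k L) = Submodule.span k (Set.range v) := by
    refine le_antisymm ?_ (Submodule.span_le.mpr ?_)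
    · rintro _ ⟨m, hm, rfl⟩
      rw [show m = ((⟨m, hm⟩ : N) : k[X] ⊗[k] L) from rfl, ← b.sum_repr ⟨m, hm⟩, eval_sum]
      exact Submodule.sum_mem _ fun i _ =>
        Submodule.smul_mem _ _ (Submodule.subset_span ⟨i, rfl⟩)
    · rintro _ ⟨i, rfl⟩
      exact ⟨b i, (b i).2, rfl⟩
  have hind : LinearIndependent k v := by
    refine Fintype.linearIndependent_iff.mpr fun g hg i => ?_
    set m : N := ∑ i, C (g i) • b i
    have hm0 : lieEvalZeroMap k L m = 0 := by simpa only [m, eval_sum, coeff_C_zero] using hg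
    obtain ⟨m', hm'⟩ := exists_eq_X_smul_add_one_tmul_lieEvalZeroMap (m : k[X] ⊗[k] L)
    rw [hm0, tmul_zero, add_zero] at hm'
    have hm'N : m' ∈ N := hN m' (hm' ▸ m.2)
    have hmX : m = (X : k[X]) • ⟨m', hm'N⟩ := Subtype.ext hm'
    have hcoeff : C (g i) = X * b.repr ⟨m', hm'N⟩ i := by
      rw [← smul_eq_mul, ← Finsupp.smul_apply, ← map_smul, ← hmX, b.repr_sum_self]
    simpa using congrArg (coeff · 0) hcoeff
  rw [hspan, finrank_span_eq_card hind, finrank_eq_card_chooseBasisIndex]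

variable (k L) in
/-- `liePolyToRatFuncMap k L` (definitionally), seen as the `k[t]`-linear localisation map. -/
noncomputable def polyToRatFuncTensor : k[X] ⊗[k] L →ₗ[k[X]] RatFunc k ⊗[k] L :=
  AlgebraTensorModule.rTensor k L (Algebra.linearMap k[X] (RatFunc k))

instance : IsLocalizedModule k[X]⁰ (polyToRatFuncTensor k L) := by
  unfold polyToRatFuncTensor
  infer_instance

/-- The lattice `W ∩ (k[t] ⊗[k] L)`; for `W = H` this is the paper's `M`. -/
noncomputable def polyLattice (W : Submodule (RatFunc k) (RatFunc k ⊗[k] L)) :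
    Submodule k[X] (k[X] ⊗[k] L) :=
  (W.restrictScalars k[X]).comap (polyToRatFuncTensor k L)

theorem localized'_polyLattice (W : Submodule (RatFunc k) (RatFunc k ⊗[k] L)) :
    (polyLattice W).localized' (RatFunc k) k[X]⁰ (polyToRatFuncTensor k L) = W :=
  (Submodule.localized'gi (RatFunc k) k[X]⁰ (polyToRatFuncTensor k L)).l_u_eq W

theorem finrank_polyLattice (W : Submodule (RatFunc k) (RatFunc k ⊗[k] L)) :
    finrank k[X] (polyLattice W) = finrank (RatFunc k) W := by
  have := IsLocalizedModule.finrank_eq (M := polyLattice W) k[X]⁰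
    ((polyLattice W).toLocalized' (RatFunc k) k[X]⁰ (polyToRatFuncTensor k L)) le_rfl
  rw [localized'_polyLattice] at this
  rw [← this, IsLocalization.finrank_eq (RatFunc k) k[X]⁰ le_rfl]

theorem smul_mem_polyLattice_iff {W : Submodule (RatFunc k) (RatFunc k ⊗[k] L)} {p : k[X]}
    (hp : p ≠ 0) {m : k[X] ⊗[k] L} : p • m ∈ polyLattice W ↔ m ∈ polyLattice W := by
  simp only [polyLattice, Submodule.mem_comap, map_smul, Submodule.restrictScalars_mem,
    ← algebraMap_smul (RatFunc k) p]
  exact Submodule.smul_mem_iff _ (by simpa using hp)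

/-- `ε₀(W ∩ (k[t] ⊗[k] L))`; for `W = H` this is the paper's `S`. -/
noncomputable def specialization (W : Submodule (RatFunc k) (RatFunc k ⊗[k] L)) :
    Submodule k L :=
  ((polyLattice W).restrictScalars k).map (lieEvalZeroMap k L)

theorem finrank_specialization [Module.Finite k L]
    (W : Submodule (RatFunc k) (RatFunc k ⊗[k] L)) :
    finrank k (specialization W) = finrank (RatFunc k) W := by
  have := Module.free_of_finite_type_torsion_free' (R := k[X]) (M := polyLattice W)
  have hsaturated (m) : (X : k[X]) • m ∈ polyLattice W → m ∈ polyLattice W :=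
    (smul_mem_polyLattice_iff X_ne_zero).mp
  rw [specialization, finrank_map_lieEvalZeroMap hsaturated, finrank_polyLattice]

end Specialization

section Lie

open Polynomial TensorProduct

theorem map_lie_of_map_lie_tmul {R A L M : Type*} [CommRing R] [CommRing A] [Algebra R A]
    [LieRing L] [LieAlgebra R L] [LieRing M] (f : A ⊗[R] L →+ M)
    (h : ∀ (a b : A) (x y : L), f ((a * b) ⊗ₜ ⁅x, y⁆) = ⁅f (a ⊗ₜ x), f (b ⊗ₜ y)⁆)
    (u v : A ⊗[R] L) : f ⁅u, v⁆ = ⁅f u, f v⁆ := by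
  induction u using TensorProduct.induction_on with
  | zero => simp
  | add u₁ u₂ h₁ h₂ => rw [add_lie, map_add, h₁, h₂, map_add, add_lie]
  | tmul a x =>
    induction v using TensorProduct.induction_on with
    | zero => simp
    | add v₁ v₂ h₁ h₂ => rw [lie_add, map_add, h₁, h₂, map_add, lie_add]
    | tmul b y => exact h a b x y

variable {k L : Type*} [Field k] [LieRing L] [LieAlgebra k L]

theorem liePolyToRatFuncMap_lie (u v : k[X] ⊗[k] L) :
    liePolyToRatFuncMap k L ⁅u, v⁆ = ⁅liePolyToRatFuncMap k L u, liePolyToRatFuncMap k L v⁆ :=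
  map_lie_of_map_lie_tmul (liePolyToRatFuncMap k L).toAddMonoidHom
    (fun a b x y => by simp [liePolyToRatFuncMap]) u v

theorem lieEvalZeroMap_lie (u v : k[X] ⊗[k] L) :
    lieEvalZeroMap k L ⁅u, v⁆ = ⁅lieEvalZeroMap k L u, lieEvalZeroMap k L v⁆ :=
  map_lie_of_map_lie_tmul (lieEvalZeroMap k L).toAddMonoidHom
    (fun a b x y => by
      simp only [LinearMap.toAddMonoidHom_coe, lieEvalZeroMap_tmul, mul_coeff_zero, smul_lie,
        lie_smul, mul_smul]
      exact smul_comm _ _ _) u v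

theorem liePolyToRatFuncMap_injective : Function.Injective (liePolyToRatFuncMap k L) :=
  Module.Flat.rTensor_preserves_injective_linearMap _
    (IsFractionRing.injective k[X] (RatFunc k))

def Submodule.lieCenter {R L : Type*} [CommRing R] [LieRing L] [LieAlgebra R L]
    (W : Submodule R L) : Submodule R L where
  carrier := {x ∈ W | ∀ w ∈ W, ⁅x, w⁆ = 0}
  zero_mem' := ⟨W.zero_mem, fun w _ => zero_lie w⟩
  add_mem' := fun ⟨hx, hx'⟩ ⟨hy, hy'⟩ =>
    ⟨W.add_mem hx hy, fun w hw => by rw [add_lie, hx' w hw, hy' w hw, add_zero]⟩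
  smul_mem' := fun c x ⟨hx, hx'⟩ =>
    ⟨W.smul_mem c hx, fun w hw => by rw [smul_lie, hx' w hw, smul_zero]⟩

noncomputable def LieSubalgebra.specialization
    (H : LieSubalgebra (RatFunc k) (RatFunc k ⊗[k] L)) : LieSubalgebra k L where
  toSubmodule := _root_.specialization H.toSubmodule
  lie_mem' := by
    rintro _ _ ⟨m, hm, rfl⟩ ⟨m', hm', rfl⟩
    refine ⟨⁅m, m'⁆, ?_, lieEvalZeroMap_lie m m'⟩
    change liePolyToRatFuncMap k L ⁅m, m'⁆ ∈ H
    rw [liePolyToRatFuncMap_lie]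
    exact H.lie_mem hm hm'

theorem span_lie_specialization_le (W : Submodule (RatFunc k) (RatFunc k ⊗[k] L)) :
    Submodule.span k {z | ∃ x ∈ specialization W, ∃ y ∈ specialization W, z = ⁅x, y⁆} ≤
      specialization (Submodule.span (RatFunc k) {z | ∃ x ∈ W, ∃ y ∈ W, z = ⁅x, y⁆}) := by
  rw [Submodule.span_le]
  rintro _ ⟨_, ⟨m, hm, rfl⟩, _, ⟨m', hm', rfl⟩, rfl⟩
  refine ⟨⁅m, m'⁆, Submodule.subset_span ⟨_, hm, _, hm', ?_⟩, lieEvalZeroMap_lie m m'⟩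
  exact liePolyToRatFuncMap_lie m m'

theorem specialization_lieCenter_le (W : Submodule (RatFunc k) (RatFunc k ⊗[k] L)) :
    specialization W.lieCenter ≤ (specialization W).lieCenter := by
  rintro _ ⟨m, ⟨hm, hcomm⟩, rfl⟩
  refine ⟨⟨m, hm, rfl⟩, ?_⟩
  rintro _ ⟨m', hm', rfl⟩
  have hlie : ⁅m, m'⁆ = 0 := liePolyToRatFuncMap_injective <| by
    rw [liePolyToRatFuncMap_lie, map_zero]
    exact hcomm _ hm'
  rw [← lieEvalZeroMap_lie, hlie, map_zero]

end Lie

/-- Specialisation of Lie subalgebras: for an `F = k(t)`-Lie subalgebra `H` of `F ⊗[k] L`,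
the specialisation at `t = 0` of `H ∩ (k[t] ⊗[k] L)` is a Lie subalgebra `S` of `L` with
`dim_k S = dim_F H`, `dim_k ⁅S,S⁆ ≤ dim_F ⁅H,H⁆` (hence
`dim_k S - dim_k ⁅S,S⁆ ≥ dim_F H - dim_F ⁅H,H⁆`), and `dim_k z(S) ≥ dim_F z(H)`. -/
theorem lie_specialization_subalgebra
    (k : Type*) [Field k] (L : Type*) [LieRing L] [LieAlgebra k L] [Module.Finite k L]
    (H : LieSubalgebra (RatFunc k) (RatFunc k ⊗[k] L))
    (S : Set L)
    (hS : S = {x : L | ∃ m : Polynomial k ⊗[k] L,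
      liePolyToRatFuncMap k L m ∈ H ∧ lieEvalZeroMap k L m = x})
    (brS : Set L) (hbrS : brS = {z : L | ∃ x ∈ S, ∃ y ∈ S, z = ⁅x, y⁆})
    (brH : Set (RatFunc k ⊗[k] L))
    (hbrH : brH = {z : RatFunc k ⊗[k] L |
      ∃ x ∈ (H : Set (RatFunc k ⊗[k] L)), ∃ y ∈ (H : Set (RatFunc k ⊗[k] L)), z = ⁅x, y⁆})
    (zS : Set L) (hzS : zS = {x ∈ S | ∀ s ∈ S, ⁅x, s⁆ = 0})
    (zH : Set (RatFunc k ⊗[k] L))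
    (hzH : zH = {x ∈ (H : Set (RatFunc k ⊗[k] L)) |
      ∀ h ∈ (H : Set (RatFunc k ⊗[k] L)), ⁅x, h⁆ = 0}) :
    (∃ S' : LieSubalgebra k L, (S' : Set L) = S ∧
        Module.finrank k S' = Module.finrank (RatFunc k) H) ∧
    Module.finrank k (Submodule.span k brS) ≤
      Module.finrank (RatFunc k) (Submodule.span (RatFunc k) brH) ∧
    Module.finrank (RatFunc k) H -
        Module.finrank (RatFunc k) (Submodule.span (RatFunc k) brH) ≤
      Module.finrank k (Submodule.span k S) -
        Module.finrank k (Submodule.span k brS) ∧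
    Module.finrank (RatFunc k) (Submodule.span (RatFunc k) zH) ≤
      Module.finrank k (Submodule.span k zS) := by
  obtain rfl : S = specialization H.toSubmodule := hS
  obtain rfl : zH = H.toSubmodule.lieCenter := hzH
  obtain rfl : zS = (specialization H.toSubmodule).lieCenter := hzS
  subst hbrS hbrH
  have hrank : Module.finrank k (specialization H.toSubmodule) = Module.finrank (RatFunc k) H :=
    finrank_specialization H.toSubmodule
  have hderived := (Submodule.finrank_mono (span_lie_specialization_le H.toSubmodule)).trans_eq
    (finrank_specialization _)
  refine ⟨⟨LieSubalgebra.specialization H, rfl, hrank⟩, hderived, ?_, ?_⟩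
  · rw [Submodule.span_eq, hrank]
    exact Nat.sub_le_sub_left hderived _
  · rw [Submodule.span_eq, Submodule.span_eq, ← finrank_specialization]
    exact Submodule.finrank_mono (specialization_lieCenter_le _)
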